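/- arXiv:2101.07000 — 6 statements merged into one kernel-verified Lean document; each statement's English description precedes it below -/
import Mathlib

section
/- Let (G,σ) be a best match graph and (T,σ) its least resolved tree with root ρ. Then for every vertex v of T with v ≺_T ρ, the best match graph G(T(v), σ|.) of the subtree rooted at v is connected. -/
/-- A (finite) rooted tree on vertex type `V`, encoded by its ancestor relation:
`anc u v` means that `u` is an ancestor of `v`, i.e. `u` lies on the path from
the root to `v` (in particular the relation is reflexive, `v ⪯_T u ↔ anc u v`). -/
structure RTree (V : Type) where
  anc : V → V → Prop
  refl : ∀ v, anc v v
  antisymm : ∀ u v, anc u v → anc v u → u = v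
  trans : ∀ u v w, anc u v → anc v w → anc u w
  root : V
  root_anc : ∀ v, anc root v
  chain : ∀ u v w, anc u w → anc v w → anc u v ∨ anc v u

namespace RTree

variable {V C : Type}

/-- a leaf: a vertex without proper descendants. -/
def IsLeaf (T : RTree V) (v : V) : Prop := ∀ w, T.anc v w → w = v

/-- `v` is a child of `u`: `v ≺_T u` with no vertex strictly in between. -/
def IsChild (T : RTree V) (v u : V) : Prop :=
  T.anc u v ∧ u ≠ v ∧ ∀ w, T.anc u w → T.anc w v → w = u ∨ w = v

/-- phylogenetic: every inner vertex has at least two children. -/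
def Phylo (T : RTree V) : Prop :=
  ∀ u, ¬ T.IsLeaf u → ∃ v w, v ≠ w ∧ T.IsChild v u ∧ T.IsChild w u

/-- the leaf set `L(T)`. -/
def leaves (T : RTree V) : Set V := {x | T.IsLeaf x}

/-- `y` is a best match of `x` in the leaf-colored tree `(T,σ)`:
both are leaves, `σ x ≠ σ y`, and for every leaf `y'` of the color `σ y` we have
`lca(x,y) ⪯_T lca(x,y')`, i.e. every common ancestor of `x` and `y'` is an
ancestor of `y`.  These are exactly the arcs of the best match graph `G(T,σ)`,
whose vertex set is the leaf set of `T`. -/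
def BestMatch (T : RTree V) (σ : V → C) (x y : V) : Prop :=
  T.IsLeaf x ∧ T.IsLeaf y ∧ σ x ≠ σ y ∧
    ∀ y', T.IsLeaf y' → σ y' = σ y →
      ∀ u, T.anc u x → T.anc u y' → T.anc u y

/-- the subtree `T(v)` of `T` rooted at `v`. -/
def subtree (T : RTree V) (v : V) : RTree {w : V // T.anc v w} where
  anc a b := T.anc a.1 b.1
  refl a := T.refl a.1
  antisymm a b h1 h2 := Subtype.ext (T.antisymm _ _ h1 h2)
  trans a b c h1 h2 := T.trans _ _ _ h1 h2
  root := ⟨v, T.refl v⟩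
  root_anc a := a.2
  chain a b c h1 h2 := T.chain _ _ _ h1 h2

/-- contraction of the tree edge between the non-root vertex `v` and its
parent: the vertex `v` is identified with its parent, i.e. deleted. -/
def contract (T : RTree V) (v : V) (hv : v ≠ T.root) : RTree {w : V // w ≠ v} where
  anc a b := T.anc a.1 b.1
  refl a := T.refl a.1
  antisymm a b h1 h2 := Subtype.ext (T.antisymm _ _ h1 h2)
  trans a b c h1 h2 := T.trans _ _ _ h1 h2
  root := ⟨T.root, Ne.symm hv⟩
  root_anc a := T.root_anc a.1
  chain a b c h1 h2 := T.chain _ _ _ h1 h2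

/-- The edge of `T` between `v` and its parent is redundant with respect to
`G(T,σ)`: contracting it yields a tree that still explains `G(T,σ)`, i.e. the
contracted tree has the same leaf set and induces the same best-match arcs.
(Edges of a rooted tree are identified with their lower endpoint `v`.) -/
def Redundant (T : RTree V) (σ : V → C) (v : V) : Prop :=
  ∃ hv : v ≠ T.root,
    ¬ T.IsLeaf v ∧
    (∀ w : {w : V // w ≠ v}, T.IsLeaf w.1 ↔ (T.contract v hv).IsLeaf w) ∧
    (∀ x y : {w : V // w ≠ v},
      (T.BestMatch σ x.1 y.1 ↔ (T.contract v hv).BestMatch (fun w => σ w.1) x y))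

/-- `(T,σ)` is the least resolved tree (of the BMG `G(T,σ)`): a phylogenetic
tree none of whose edges is redundant. -/
def LeastResolved (T : RTree V) (σ : V → C) : Prop :=
  T.Phylo ∧ ∀ v, ¬ T.Redundant σ v

/-- the support leaves `S_u = child_T(u) ∩ L(T)` of a vertex `u`. -/
def SupportLeaves (T : RTree V) (u : V) : Set V :=
  {v | T.IsChild v u ∧ T.IsLeaf v}

/-- the set of colors `σ(L(T(v)))` occurring on leaves of the subtree `T(v)`. -/
def subColors (T : RTree V) (σ : V → C) (v : V) : Set C :=
  σ '' {x | T.IsLeaf x ∧ T.anc v x}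

/-- the set of colors `σ(L(T))` of the leaves of `T`. -/
def leafColors (T : RTree V) (σ : V → C) : Set C := σ '' T.leaves

/-- the leaf coloring uses exactly two colors, i.e. `G(T,σ)` is a 2-BMG. -/
def TwoColored (T : RTree V) (σ : V → C) : Prop :=
  ∃ c₁ c₂ : C, c₁ ≠ c₂ ∧ T.leafColors σ = {c₁, c₂}

end RTree

/-- the digraph with arc relation `A`, restricted to the vertex set `S`, is
connected: between any two vertices of `S` there is a path inside `S` in the
underlying undirected graph. -/
def ConnectedOn {β : Type} (A : β → β → Prop) (S : Set β) : Prop :=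
  S.Nonempty ∧ ∀ x ∈ S, ∀ y ∈ S,
    Relation.ReflTransGen (fun a b => a ∈ S ∧ b ∈ S ∧ (A a b ∨ A b a)) x y

/-- `K` is a connected component of the digraph induced by the arc relation `A`
on the vertex set `S`: a maximal connected subset of `S`. -/
def IsComponent {β : Type} (A : β → β → Prop) (S : Set β) (K : Set β) : Prop :=
  K ⊆ S ∧ ConnectedOn A K ∧
    ∀ K', K ⊆ K' → K' ⊆ S → ConnectedOn A K' → K' = K

namespace RTree

/-- the best match graph `G(T,σ)` (on the leaf set of `T`) is connected. -/
def BMGConnected {V C : Type} (T : RTree V) (σ : V → C) : Prop :=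
  ConnectedOn (T.BestMatch σ) T.leaves

/-- the umbrella vertices `U(G,σ)` of the BMG `G(T,σ)`: leaves having an
out-arc to every differently colored leaf. -/
def Umbrella {V C : Type} (T : RTree V) (σ : V → C) : Set V :=
  {x | T.IsLeaf x ∧ ∀ y, T.IsLeaf y → σ y ≠ σ x → T.BestMatch σ x y}

/-- `S` is closed under in-neighbours in `G(T,σ)`: `x ∈ S → N⁻(x) ⊆ S`. -/
def InClosed {V C : Type} (T : RTree V) (σ : V → C) (S : Set V) : Prop :=
  ∀ x ∈ S, ∀ y, T.BestMatch σ y x → y ∈ S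

/-- `S` is a support set of `G(T,σ)`: a maximal subset of the umbrella
vertices that is closed under in-neighbours. -/
def IsSupportSet {V C : Type} (T : RTree V) (σ : V → C) (S : Set V) : Prop :=
  S ⊆ T.Umbrella σ ∧ T.InClosed σ S ∧
    ∀ S', S ⊆ S' → S' ⊆ T.Umbrella σ → T.InClosed σ S' → S' = S

end RTree

/-! In a least resolved tree no edge is redundant. Contracting the edge above an inner vertex
`u ≠ ρ` only removes `u` as a possible last common ancestor, and this changes no best match as
long as every color below `u` reappears below each child of `u`. Hence every such `u` has a
child `w` below which some color of `T(u)` is missing, and this property of all inner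
vertices of `T(v)` alone makes `G(T(v), σ|)` connected. -/

theorem Relation.ReflTransGen.subtype {α : Type*} {p : α → Prop} {r : α → α → Prop}
    (hr : ∀ a b, r a b → p a) {a : Subtype p} {b : α} (h : Relation.ReflTransGen r a b)
    (hb : p b) : Relation.ReflTransGen (fun x y : Subtype p => r x y) a ⟨b, hb⟩ := by
  induction h with
  | refl => exact .refl
  | tail _ hcb ih => exact (ih (hr _ _ hcb)).tail hcb

theorem wellFounded_strict_of_antisymm {α : Type*} [Finite α] {r : α → α → Prop}
    (antisymm : ∀ a b, r a b → r b a → a = b) (trans : ∀ a b c, r a b → r b c → r a c) :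
    WellFounded fun a b => r a b ∧ a ≠ b :=
  haveI : IsTrans α fun a b => r a b ∧ a ≠ b :=
    ⟨fun a b c hab hbc => ⟨trans a b c hab.1 hbc.1,
      fun hac => hab.2 (antisymm a b hab.1 (hac ▸ hbc.1))⟩⟩
  haveI : Std.Irrefl fun a b : α => r a b ∧ a ≠ b := ⟨fun _ h => h.2 rfl⟩
  Finite.wellFounded_of_trans_of_irrefl _

namespace RTree

variable {V C : Type} {T : RTree V} {σ : V → C} {u v w x y : V}

theorem ne_root_of_anc (hv : v ≠ T.root) (hvu : T.anc v u) : u ≠ T.root :=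
  fun hu => hv (T.antisymm _ _ (hu ▸ hvu) (T.root_anc v))

theorem ne_of_isLeaf_of_not_isLeaf (hx : T.IsLeaf x) (hv : ¬ T.IsLeaf v) : x ≠ v :=
  fun h => hv (h ▸ hx)

section Finite

variable [Finite V]

theorem wellFounded_properDesc (T : RTree V) : WellFounded fun w v => T.anc v w ∧ w ≠ v :=
  wellFounded_strict_of_antisymm (fun a b hab hba => T.antisymm a b hba hab)
    (fun a b c hab hbc => T.trans c b a hbc hab)

theorem exists_isLeaf_anc (T : RTree V) (v : V) : ∃ x, T.IsLeaf x ∧ T.anc v x := by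
  obtain ⟨x, hvx, hmin⟩ := (wellFounded_properDesc T).has_min {x | T.anc v x} ⟨v, T.refl v⟩
  refine ⟨x, fun y hxy => ?_, hvx⟩
  by_contra hyx
  exact hmin y (T.trans _ _ _ hvx hxy) ⟨hxy, hyx⟩

theorem exists_isChild_anc (hvx : T.anc v x) (hxv : x ≠ v) : ∃ w, T.IsChild w v ∧ T.anc w x := by
  have hwf := wellFounded_strict_of_antisymm T.antisymm T.trans
  obtain ⟨w, ⟨hvw, hwv, hwx⟩, hmin⟩ :=
    hwf.has_min {w | T.anc v w ∧ w ≠ v ∧ T.anc w x} ⟨x, hvx, hxv, T.refl x⟩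
  refine ⟨w, ⟨hvw, Ne.symm hwv, fun z hvz hzw => ?_⟩, hwx⟩
  by_contra! hz
  exact hmin z ⟨hvz, hz.1, T.trans _ _ _ hzw hwx⟩ ⟨hzw, hz.2⟩

end Finite

theorem contract_isLeaf_iff (hv : v ≠ T.root) (hinner : ¬ T.IsLeaf v) (x : {x : V // x ≠ v}) :
    (T.contract v hv).IsLeaf x ↔ T.IsLeaf x.1 := by
  refine ⟨fun h u hxu => ?_, fun h u hxu => Subtype.ext (h u.1 hxu)⟩
  by_cases huv : u = v
  · subst huv
    obtain ⟨z, hz, hzu⟩ : ∃ z, T.anc u z ∧ z ≠ u := by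
      by_contra! hcon
      exact hinner hcon
    have hzx := congrArg Subtype.val (h ⟨z, hzu⟩ (T.trans _ _ _ hxu hz))
    exact (x.2 (T.antisymm _ _ hxu (hzx ▸ hz))).elim
  · exact congrArg Subtype.val (h ⟨u, huv⟩ hxu)

theorem contract_bestMatch_iff [Finite V] (hv : v ≠ T.root) (hinner : ¬ T.IsLeaf v)
    (hsub : ∀ w, T.IsChild w v → T.subColors σ v ⊆ T.subColors σ w) (x y : {x : V // x ≠ v}) :
    (T.contract v hv).BestMatch (fun w => σ w.1) x y ↔ T.BestMatch σ x.1 y.1 := by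
  simp only [BestMatch, contract_isLeaf_iff hv hinner]
  refine and_congr_right fun hx => and_congr_right fun _ => and_congr_right fun _ =>
    ⟨fun h y' hy' hσy' u hux huy' => ?_, fun h y' hy' hσy' u hux huy' =>
      h y'.1 hy' hσy' u.1 hux huy'⟩
  have hleaf : ∀ z, T.IsLeaf z → z ≠ v := fun z hz => ne_of_isLeaf_of_not_isLeaf hz hinner
  by_cases huv : u = v
  · subst huv
    obtain ⟨w, hw, hwx⟩ := exists_isChild_anc hux (hleaf x hx)
    obtain ⟨z, ⟨hz, hwz⟩, hσz⟩ := hsub w hw ⟨y', ⟨hy', huy'⟩, hσy'⟩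
    exact T.trans _ _ _ hw.1 (h ⟨z, hleaf z hz⟩ hz hσz ⟨w, hw.2.1.symm⟩ hwx hwz)
  · exact h ⟨y', hleaf y' hy'⟩ hy' hσy' ⟨u, huv⟩ hux huy'

theorem redundant_of_forall_subColors_subset [Finite V] (hv : v ≠ T.root)
    (hinner : ¬ T.IsLeaf v) (hsub : ∀ w, T.IsChild w v → T.subColors σ v ⊆ T.subColors σ w) :
    T.Redundant σ v :=
  ⟨hv, hinner, fun x => (contract_isLeaf_iff hv hinner x).symm,
    fun x y => (contract_bestMatch_iff hv hinner hsub x y).symm⟩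

def BestMatchBelow (T : RTree V) (σ : V → C) (v x y : V) : Prop :=
  T.IsLeaf x ∧ T.IsLeaf y ∧ T.anc v x ∧ T.anc v y ∧ σ x ≠ σ y ∧
    ∀ y', T.IsLeaf y' → T.anc v y' → σ y' = σ y →
      ∀ u, T.anc v u → T.anc u x → T.anc u y' → T.anc u y

theorem subtree_isLeaf_iff (x : {x : V // T.anc v x}) :
    (T.subtree v).IsLeaf x ↔ T.IsLeaf x.1 :=
  ⟨fun h u hxu => congrArg Subtype.val (h ⟨u, T.trans _ _ _ x.2 hxu⟩ hxu),
    fun h u hxu => Subtype.ext (h u.1 hxu)⟩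

theorem subtree_bestMatch_iff (x y : {x : V // T.anc v x}) :
    (T.subtree v).BestMatch (fun w => σ w.1) x y ↔ T.BestMatchBelow σ v x.1 y.1 := by
  constructor
  · rintro ⟨hx, hy, hσ, h⟩
    refine ⟨(subtree_isLeaf_iff x).1 hx, (subtree_isLeaf_iff y).1 hy, x.2, y.2, hσ, ?_⟩
    intro y' hy' hvy' hσy' u hvu hux huy'
    exact h ⟨y', hvy'⟩ ((subtree_isLeaf_iff _).2 hy') hσy' ⟨u, hvu⟩ hux huy'
  · rintro ⟨hx, hy, -, -, hσ, h⟩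
    refine ⟨(subtree_isLeaf_iff x).2 hx, (subtree_isLeaf_iff y).2 hy, hσ, ?_⟩
    intro y' hy' hσy' u hux huy'
    exact h y'.1 ((subtree_isLeaf_iff y').1 hy') y'.2 hσy' u.1 u.2 hux huy'

theorem BestMatchBelow.of_isChild (hw : T.IsChild w v) (h : T.BestMatchBelow σ w x y) :
    T.BestMatchBelow σ v x y := by
  obtain ⟨hvw, -, hbetween⟩ := hw
  obtain ⟨hx, hy, hwx, hwy, hσ, hmin⟩ := h
  refine ⟨hx, hy, T.trans _ _ _ hvw hwx, T.trans _ _ _ hvw hwy, hσ, ?_⟩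
  intro y' hy' _ hσy' u hvu hux huy'
  rcases T.chain u w x hux hwx with huw | hwu
  · rcases hbetween u hvu huw with rfl | rfl
    · exact T.trans _ _ _ hvw hwy
    · exact hwy
  · exact hmin y' hy' (T.trans _ _ _ hwu huy') hσy' u hwu hux huy'

/-- `lca(x, y') = v` for every leaf `y'` of `T(v)` of color `σ y`, since `T(w)` has none. -/
theorem bestMatchBelow_of_not_mem_subColors (hw : T.IsChild w v) (hx : T.IsLeaf x)
    (hwx : T.anc w x) (hy : T.IsLeaf y) (hvy : T.anc v y) (hmiss : σ y ∉ T.subColors σ w) :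
    T.BestMatchBelow σ v x y := by
  obtain ⟨hvw, -, hbetween⟩ := hw
  have hnot : ∀ z, T.IsLeaf z → T.anc w z → σ z ≠ σ y := fun z hz hwz hσz =>
    hmiss ⟨z, ⟨hz, hwz⟩, hσz⟩
  refine ⟨hx, hy, T.trans _ _ _ hvw hwx, hvy, hnot x hx hwx, ?_⟩
  intro y' hy' _ hσy' u hvu hux huy'
  rcases T.chain u w x hux hwx with huw | hwu
  · rcases hbetween u hvu huw with rfl | rfl
    · exact hvy
    · exact absurd hσy' (hnot y' hy' huy')
  · exact absurd hσy' (hnot y' hy' (T.trans _ _ _ hwu huy'))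

def LinkedBelow (T : RTree V) (σ : V → C) (v : V) : V → V → Prop :=
  Relation.ReflTransGen fun a b => T.BestMatchBelow σ v a b ∨ T.BestMatchBelow σ v b a

theorem LinkedBelow.symm (h : T.LinkedBelow σ v x y) : T.LinkedBelow σ v y x :=
  Relation.reflTransGen_swap.1 (Relation.ReflTransGen.mono (fun _ _ => Or.symm) _ _ h)

theorem LinkedBelow.of_isChild (hw : T.IsChild w v) (h : T.LinkedBelow σ w x y) :
    T.LinkedBelow σ v x y :=
  Relation.ReflTransGen.mono (fun _ _ => Or.imp (.of_isChild hw) (.of_isChild hw)) _ _ h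

/-- The leaf `y₀` carries a color `c` missing below the child `w₁` of `v`. Every leaf `x`
below a child `w` of `v` is linked to `y₀`: directly if `T(w)` lacks `c`, and otherwise
through a leaf of color `c` in `T(w)` (by induction) and a leaf of `T(w₁)`, whose best
matches of color `c` are all leaves of color `c` in `T(v)`. -/
theorem linkedBelow_of_isLeaf [Finite V]
    (hdrop : ∀ u, T.anc v u → ¬ T.IsLeaf u →
      ∃ w, T.IsChild w u ∧ ¬ T.subColors σ u ⊆ T.subColors σ w)
    (hx : T.IsLeaf x) (hvx : T.anc v x) (hy : T.IsLeaf y) (hvy : T.anc v y) :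
    T.LinkedBelow σ v x y := by
  induction v using (wellFounded_properDesc T).induction generalizing x y with
  | _ v ih =>
  by_cases hv : T.IsLeaf v
  · rw [hv x hvx, hv y hvy]
    exact .refl
  obtain ⟨w₁, hw₁, hdrop₁⟩ := hdrop v (T.refl v) hv
  obtain ⟨_, ⟨y₀, ⟨hy₀, hvy₀⟩, rfl⟩, hmiss₁⟩ := Set.not_subset.1 hdrop₁
  obtain ⟨x₁, hx₁, hw₁x₁⟩ := exists_isLeaf_anc T w₁
  have hub : ∀ x, T.IsLeaf x → T.anc v x → T.LinkedBelow σ v x y₀ := by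
    intro x hx hvx
    obtain ⟨w, hw, hwx⟩ := exists_isChild_anc hvx (ne_of_isLeaf_of_not_isLeaf hx hv)
    by_cases hmiss : σ y₀ ∉ T.subColors σ w
    · exact .single (.inl (bestMatchBelow_of_not_mem_subColors hw hx hwx hy₀ hvy₀ hmiss))
    obtain ⟨y₁, ⟨hy₁, hwy₁⟩, hσy₁⟩ := not_not.1 hmiss
    have hxy₁ : T.LinkedBelow σ v x y₁ :=
      (ih w ⟨hw.1, hw.2.1.symm⟩ (fun u hwu => hdrop u (T.trans _ _ _ hw.1 hwu))
        hx hwx hy₁ hwy₁).of_isChild hw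
    have hx₁y₁ : T.BestMatchBelow σ v x₁ y₁ := bestMatchBelow_of_not_mem_subColors hw₁ hx₁
      hw₁x₁ hy₁ (T.trans _ _ _ hw.1 hwy₁) (hσy₁ ▸ hmiss₁)
    have hx₁y₀ : T.BestMatchBelow σ v x₁ y₀ :=
      bestMatchBelow_of_not_mem_subColors hw₁ hx₁ hw₁x₁ hy₀ hvy₀ hmiss₁
    exact (hxy₁.tail (.inr hx₁y₁)).tail (.inl hx₁y₀)
  exact (hub x hx hvx).trans (hub y hy hvy).symm

theorem bmgConnected_subtree_of_linkedBelow [Finite V]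
    (h : ∀ x y, T.IsLeaf x → T.anc v x → T.IsLeaf y → T.anc v y → T.LinkedBelow σ v x y) :
    (T.subtree v).BMGConnected fun w => σ w.1 := by
  obtain ⟨x₀, hx₀, hvx₀⟩ := exists_isLeaf_anc T v
  refine ⟨⟨⟨x₀, hvx₀⟩, (subtree_isLeaf_iff _).2 hx₀⟩, fun x hx y hy => ?_⟩
  have hpath := (h x y ((subtree_isLeaf_iff x).1 hx) x.2 ((subtree_isLeaf_iff y).1 hy) y.2).subtype
    (fun a b hab => hab.elim (·.2.2.1) (·.2.2.2.1)) y.2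
  refine Relation.ReflTransGen.mono (fun a b hab => ⟨?_, ?_, hab.imp (subtree_bestMatch_iff a b).2
    (subtree_bestMatch_iff b a).2⟩) _ _ hpath
  · exact (subtree_isLeaf_iff a).2 (hab.elim (·.1) (·.2.1))
  · exact (subtree_isLeaf_iff b).2 (hab.elim (·.2.1) (·.1))

end RTree

/-- Let `(G,σ)` be a BMG and `(T,σ)` its least resolved tree.
Then for every vertex `v ≺_T ρ` the BMG `G(T(v), σ|.)` of the subtree rooted
at `v` is connected. -/
theorem lrt_subtree_bmg_connected {V C : Type} [Fintype V]
    (T : RTree V) (σ : V → C) (hLRT : T.LeastResolved σ)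
    (v : V) (hv : v ≠ T.root) :
    RTree.BMGConnected (T.subtree v) (fun w => σ w.1) := by
  refine RTree.bmgConnected_subtree_of_linkedBelow fun x y hx hvx hy hvy =>
    RTree.linkedBelow_of_isLeaf (fun u hvu hu => ?_) hx hvx hy hvy
  by_contra! hsub
  exact hLRT.2 u (RTree.redundant_of_forall_subColors_subset (RTree.ne_root_of_anc hv hvu) hu hsub)
end

section
/- Let (T,σ) be the least resolved tree of some best match graph (G,σ), with root ρ. Then every vertex v of T with v ≺_T ρ such that the leaves of the subtree T(v) carry only one color (|σ(L(T(v)))| = 1) is a leaf of T. -/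
/-- Let `(T,σ)` be the least resolved tree of some BMG.
Then every vertex `v ≺_T ρ` with `|σ(L(T(v)))| = 1` is a leaf. -/
theorem lrt_single_color_subtree_is_leaf {V C : Type} [Fintype V]
    (T : RTree V) (σ : V → C) (hLRT : T.LeastResolved σ)
    (v : V) (hv : v ≠ T.root) (h1 : (T.subColors σ v).ncard = 1) :
    T.IsLeaf v := by
  by_contra hnl
  obtain ⟨c, hc⟩ := Set.ncard_eq_one.mp h1
  -- every leaf below v has color c
  have hcol : ∀ x, T.IsLeaf x → T.anc v x → σ x = c := by
    intro x hx hax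
    have : σ x ∈ T.subColors σ v := ⟨x, ⟨hx, hax⟩, rfl⟩
    rw [hc] at this
    exact this
  -- v has a proper descendant
  obtain ⟨u0, hu01, hu02⟩ : ∃ u, T.anc v u ∧ u ≠ v := by
    by_contra h'
    push_neg at h'
    exact hnl (fun w hw => h' w hw)
  -- leaf sets agree
  have hleaf : ∀ w : {w : V // w ≠ v}, T.IsLeaf w.1 ↔ (T.contract v hv).IsLeaf w := by
    intro w
    constructor
    · intro h a ha
      exact Subtype.ext (h a.1 ha)
    · intro h a ha
      by_cases hav : a = v
      · exfalso
        subst hav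
        have h1' := h ⟨u0, hu02⟩ (T.trans _ _ _ ha hu01)
        have h2' : u0 = w.1 := congrArg Subtype.val h1'
        subst h2'
        exact w.2 (T.antisymm _ _ ha hu01)
      · exact congrArg Subtype.val (h ⟨a, hav⟩ ha)
  have hred : T.Redundant σ v := by
    refine ⟨hv, hnl, hleaf, ?_⟩
    intro x y
    constructor
    · rintro ⟨hx, hy, hne, hbm⟩
      refine ⟨(hleaf x).mp hx, (hleaf y).mp hy, hne, ?_⟩
      intro y' hy' hcy' u hux huy'
      exact hbm y'.1 ((hleaf y').mpr hy') hcy' u.1 hux huy'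
    · rintro ⟨hx, hy, hne, hbm⟩
      have hx' := (hleaf x).mpr hx
      have hy' := (hleaf y).mpr hy
      refine ⟨hx', hy', hne, ?_⟩
      intro y' hly' hcy' u hux huy'
      have hy'v : y' ≠ v := by
        intro h; subst h; exact hnl hly'
      by_cases huv : u = v
      · subst huv
        exfalso
        have e1 : σ x.1 = c := hcol x.1 hx' hux
        have e2 : σ y' = c := hcol y' hly' huy'
        exact hne (e1.trans (e2.symm.trans hcy'))
      · exact hbm ⟨y', hy'v⟩ ((hleaf ⟨y', hy'v⟩).mp hly') hcy' ⟨u, huv⟩ hux huy'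
  exact hLRT.2 v hred
end

section
/- Let (T,σ) be the least resolved tree of some best match graph (G,σ), with root ρ. Then a vertex v of T with v ≺_T ρ is an inner vertex of T if and only if the leaves of the subtree T(v) carry more than one color, i.e., |σ(L(T(v)))| > 1. -/
section Aux
open Classical

lemma exists_leaf_below {V : Type} [Fintype V] (T : RTree V) (v : V) :
    ∃ x, T.IsLeaf x ∧ T.anc v x := by
  classical
  let r : V → V → Prop := fun a b => T.anc b a ∧ a ≠ b
  haveI : IsTrans V r := ⟨by
    rintro a b c ⟨h1, h2⟩ ⟨h3, h4⟩
    refine ⟨T.trans _ _ _ h3 h1, ?_⟩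
    rintro rfl
    exact h2 (T.antisymm _ _ h3 h1)⟩
  haveI : IsIrrefl V r := ⟨fun a h => h.2 rfl⟩
  have hwf : WellFounded r := Finite.wellFounded_of_trans_of_irrefl r
  obtain ⟨m, hm, hmin⟩ := hwf.has_min {w | T.anc v w} ⟨v, T.refl v⟩
  refine ⟨m, ?_, hm⟩
  intro w hw
  by_contra hne
  exact hmin w (T.trans _ _ _ hm hw) ⟨hw, hne⟩

end Aux

/-- Let `(T,σ)` be the least resolved tree of some BMG.
A vertex `v ≺_T ρ` is an inner vertex of `T` iff `|σ(L(T(v)))| > 1`. -/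
theorem lrt_inner_iff_multiple_colors {V C : Type} [Fintype V]
    (T : RTree V) (σ : V → C) (hLRT : T.LeastResolved σ)
    (v : V) (hv : v ≠ T.root) :
    ¬ T.IsLeaf v ↔ 1 < (T.subColors σ v).ncard := by
  classical
  constructor
  · intro hinner
    by_contra h2
    -- all leaves below v share the same color
    have hfin : (T.subColors σ v).Finite :=
      (Set.toFinite {x | T.IsLeaf x ∧ T.anc v x}).image σ
    have hc : ∀ x x', T.IsLeaf x → T.anc v x → T.IsLeaf x' → T.anc v x' →
        σ x = σ x' := by
      intro x x' hx hvx hx' hvx'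
      by_contra hne
      exact h2 ((Set.one_lt_ncard hfin).2
        ⟨σ x, ⟨x, ⟨hx, hvx⟩, rfl⟩, σ x', ⟨x', ⟨hx', hvx'⟩, rfl⟩, hne⟩)
    -- v not a leaf: get a proper descendant
    have hd : ∃ d, T.anc v d ∧ d ≠ v := by
      by_contra hno
      push_neg at hno
      exact hinner (fun w hw => hno w hw)
    -- leaf equivalence under contraction
    have hleaf : ∀ w : {w : V // w ≠ v},
        T.IsLeaf w.1 ↔ (T.contract v hv).IsLeaf w := by
      intro w
      constructor
      · intro h w' h'
        exact Subtype.ext (h w'.1 h')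
      · intro h w' hw'
        by_cases hwv : w' = v
        · subst hwv
          obtain ⟨d, hvd, hdv⟩ := hd
          have := h ⟨d, hdv⟩ (T.trans _ _ _ hw' hvd)
          have hdw : d = w.1 := congrArg Subtype.val this
          exact absurd (T.antisymm _ _ hw' (hdw ▸ hvd)) w.2
        · exact congrArg Subtype.val (h ⟨w', hwv⟩ hw')
    -- redundancy, contradicting LRT
    refine hLRT.2 v ⟨hv, hinner, hleaf, ?_⟩
    intro x y
    constructor
    · rintro ⟨hx, hy, hxy, hbm⟩
      refine ⟨(hleaf x).1 hx, (hleaf y).1 hy, hxy, ?_⟩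
      intro y' hy' hcy' u hux huy'
      have hy'T : T.IsLeaf y'.1 := (hleaf y').2 hy'
      exact hbm y'.1 hy'T hcy' u.1 hux huy'
    · rintro ⟨hx, hy, hxy, hbm⟩
      have hxT : T.IsLeaf x.1 := (hleaf x).2 hx
      have hyT : T.IsLeaf y.1 := (hleaf y).2 hy
      refine ⟨hxT, hyT, hxy, ?_⟩
      intro y' hy' hcy' u hux huy'
      have hy'v : y' ≠ v := by rintro rfl; exact hinner hy'
      by_cases huv : u = v
      · subst huv
        exact absurd ((hc x.1 y' hxT hux hy' huy').trans hcy') hxy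
      · exact hbm ⟨y', hy'v⟩ ((hleaf ⟨y', hy'v⟩).1 hy') hcy' ⟨u, huv⟩ hux huy'
  · intro h1 hleafv
    obtain ⟨c₁, hc₁, c₂, hc₂, hne⟩ := (Set.one_lt_ncard ((Set.toFinite {x | T.IsLeaf x ∧ T.anc v x}).image σ)).1 h1
    obtain ⟨x, ⟨hx, hvx⟩, rfl⟩ := hc₁
    obtain ⟨x', ⟨hx', hvx'⟩, rfl⟩ := hc₂
    have : x = v := hleafv x hvx
    have : x' = v := hleafv x' hvx'
    apply hne
    simp_all
end

section
/- Let (T,σ) be the least resolved tree of a 2-colored best match graph (G,σ), with root ρ_T. Then for every inner vertex u of T with u ≠ ρ_T, u has at least one child that is a leaf, i.e., child_T(u) ∩ L(T) ≠ ∅. If moreover (G,σ) is connected, then child_T(u) ∩ L(T) ≠ ∅ holds for every inner vertex u of T, including the root. -/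
section Aux

variable {V C : Type} [Fintype V]

lemma RTree.exists_leaf_desc (T : RTree V) (v : V) : ∃ z, T.IsLeaf z ∧ T.anc v z := by
  classical
  obtain ⟨z, hz, hmin⟩ := Finset.exists_min_image (Finset.univ.filter fun w => T.anc v w)
    (fun w => (Finset.univ.filter fun u => T.anc w u).card) ⟨v, by simp [T.refl]⟩
  simp only [Finset.mem_filter, Finset.mem_univ, true_and] at hz
  refine ⟨z, ?_, hz⟩
  intro w hw
  by_contra hne
  have hsub : (Finset.univ.filter fun u => T.anc w u) ⊂ (Finset.univ.filter fun u => T.anc z u) := by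
    refine ⟨fun u hu => ?_, fun hcon => ?_⟩
    · simp only [Finset.mem_filter, Finset.mem_univ, true_and] at hu ⊢
      exact T.trans _ _ _ hw hu
    · have hzz : z ∈ (Finset.univ.filter fun u => T.anc z u) := by simp [T.refl]
      have := hcon hzz
      simp only [Finset.mem_filter, Finset.mem_univ, true_and] at this
      exact hne (T.antisymm _ _ hw this ▸ rfl)
  have hlt := Finset.card_lt_card hsub
  have hwS : w ∈ (Finset.univ.filter fun w => T.anc v w) := by
    simp [T.trans _ _ _ hz hw]
  exact absurd (hmin w hwS) (by omega)

lemma RTree.exists_child_above (T : RTree V) {v x : V} (hvx : T.anc v x) (hne : x ≠ v) :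
    ∃ c, T.IsChild c v ∧ T.anc c x := by
  classical
  set S := Finset.univ.filter (fun w => T.anc v w ∧ T.anc w x ∧ w ≠ v) with hS
  obtain ⟨c, hc, hmax⟩ := Finset.exists_max_image S
    (fun w => (Finset.univ.filter fun u => T.anc w u).card) ⟨x, by simp [hS, hvx, T.refl, hne]⟩
  simp only [hS, Finset.mem_filter, Finset.mem_univ, true_and] at hc
  obtain ⟨hvc, hcx, hcv⟩ := hc
  refine ⟨c, ⟨hvc, Ne.symm hcv, ?_⟩, hcx⟩
  intro w hvw hwc
  by_contra hcon
  push_neg at hcon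
  have hwS : w ∈ S := by
    simp only [hS, Finset.mem_filter, Finset.mem_univ, true_and]
    exact ⟨hvw, T.trans _ _ _ hwc hcx, hcon.1⟩
  have hle := hmax w hwS
  have hsub : (Finset.univ.filter fun u => T.anc c u) ⊂ (Finset.univ.filter fun u => T.anc w u) := by
    refine ⟨fun u hu => ?_, fun hcontra => ?_⟩
    · simp only [Finset.mem_filter, Finset.mem_univ, true_and] at hu ⊢
      exact T.trans _ _ _ hwc hu
    · have hww : w ∈ (Finset.univ.filter fun u => T.anc w u) := by simp [T.refl]
      have := hcontra hww
      simp only [Finset.mem_filter, Finset.mem_univ, true_and] at this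
      exact hcon.2 (T.antisymm _ _ hwc this)
  have := Finset.card_lt_card hsub
  omega

lemma RTree.child_unique (T : RTree V) {c c' x v : V} (hc : T.IsChild c v) (hc' : T.IsChild c' v)
    (h1 : T.anc c x) (h2 : T.anc c' x) : c = c' := by
  rcases T.chain c c' x h1 h2 with h | h
  · rcases hc'.2.2 c hc.1 h with h' | h'
    · exact absurd h'.symm hc.2.1
    · exact h'
  · rcases hc.2.2 c' hc'.1 h with h' | h'
    · exact absurd h'.symm hc'.2.1
    · exact h'.symm

lemma RTree.leaf_contract_iff (T : RTree V) {v : V} (hv : ¬ T.IsLeaf v) (hvr : v ≠ T.root)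
    (w : {w : V // w ≠ v}) : T.IsLeaf w.1 ↔ (T.contract v hvr).IsLeaf w := by
  constructor
  · intro h w' hw'
    exact Subtype.ext (h w'.1 hw')
  · intro h u hu
    by_cases huv : u = v
    · subst huv
      exfalso
      have : ¬ ∀ u', T.anc u u' → u' = u := hv
      push_neg at this
      obtain ⟨u', hu', hu'v⟩ := this
      have := h ⟨u', hu'v⟩ (T.trans _ _ _ hu hu')
      have hv_eq : u' = w.1 := congrArg Subtype.val this
      exact w.2 (T.antisymm _ _ hu (hv_eq ▸ hu'))
    · exact congrArg Subtype.val (h ⟨u, huv⟩ hu)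

lemma RTree.color_eq_of_two (T : RTree V) (σ : V → C) (h2 : T.TwoColored σ) {x y z : V}
    (hx : T.IsLeaf x) (hy : T.IsLeaf y) (hz : T.IsLeaf z)
    (hyx : σ y ≠ σ x) (hzx : σ z ≠ σ x) : σ z = σ y := by
  obtain ⟨c₁, c₂, hne, hcol⟩ := h2
  have mem : ∀ w, T.IsLeaf w → σ w ∈ ({c₁, c₂} : Set C) := by
    intro w hw
    rw [← hcol]
    exact ⟨w, hw, rfl⟩
  have hx' := mem x hx; have hy' := mem y hy; have hz' := mem z hz
  simp only [Set.mem_insert_iff, Set.mem_singleton_iff] at hx' hy' hz'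
  rcases hx' with h | h <;> rcases hy' with h' | h' <;> rcases hz' with h'' | h'' <;>
    simp_all

/-- below every inner vertex of the LRT both colors occur. -/
lemma RTree.both_colors (T : RTree V) (σ : V → C) (hLRT : T.LeastResolved σ)
    (h2 : T.TwoColored σ) {v : V} (hv : ¬ T.IsLeaf v) {x : V} (hx : T.IsLeaf x) :
    ∃ z, T.IsLeaf z ∧ T.anc v z ∧ σ z ≠ σ x := by
  by_cases hr : v = T.root
  · obtain ⟨c₁, c₂, hne, hcol⟩ := h2
    have hmem : ∀ c ∈ ({c₁, c₂} : Set C), ∃ z, T.IsLeaf z ∧ σ z = c := by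
      intro c hc
      rw [← hcol] at hc
      obtain ⟨z, hz, hzc⟩ := hc
      exact ⟨z, hz, hzc⟩
    have hx' : σ x ∈ ({c₁, c₂} : Set C) := by rw [← hcol]; exact ⟨x, hx, rfl⟩
    simp only [Set.mem_insert_iff, Set.mem_singleton_iff] at hx'
    rcases hx' with h | h
    · obtain ⟨z, hz, hzc⟩ := hmem c₂ (by simp)
      exact ⟨z, hz, hr ▸ T.root_anc z, by rw [hzc, h]; exact Ne.symm hne⟩
    · obtain ⟨z, hz, hzc⟩ := hmem c₁ (by simp)
      exact ⟨z, hz, hr ▸ T.root_anc z, by rw [hzc, h]; exact hne⟩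
  · by_contra hcon
    push_neg at hcon
    apply hLRT.2 v
    refine ⟨hr, hv, fun w => T.leaf_contract_iff hv hr w, fun a b => ⟨?_, ?_⟩⟩
    · intro hbm
      exact ⟨(T.leaf_contract_iff hv hr a).mp hbm.1, (T.leaf_contract_iff hv hr b).mp hbm.2.1,
        hbm.2.2.1, fun y' hy' hσ u hua huy' =>
          hbm.2.2.2 y'.1 ((T.leaf_contract_iff hv hr y').mpr hy') hσ u.1 hua huy'⟩
    · intro hbm
      have hla : T.IsLeaf a.1 := (T.leaf_contract_iff hv hr a).mpr hbm.1
      have hlb : T.IsLeaf b.1 := (T.leaf_contract_iff hv hr b).mpr hbm.2.1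
      refine ⟨hla, hlb, hbm.2.2.1, ?_⟩
      intro y' hy' hσ w hwa hwy'
      have hy'v : y' ≠ v := fun h => hv (h ▸ hy')
      by_cases hwv : w = v
      · exfalso
        subst hwv
        have h1 : σ a.1 = σ x := hcon a.1 hla hwa
        have h2' : σ y' = σ x := hcon y' hy' hwy'
        exact hbm.2.2.1 (h1.trans (h2'.symm.trans hσ))
      · exact hbm.2.2.2 ⟨y', hy'v⟩ ((T.leaf_contract_iff hv hr _).mp hy') hσ ⟨w, hwv⟩ hwa hwy'

/-- key lemma: every inner non-root vertex of the LRT has a leaf child. -/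
lemma RTree.key_lemma (T : RTree V) (σ : V → C) (hLRT : T.LeastResolved σ)
    (h2 : T.TwoColored σ) : ∀ u, ¬ T.IsLeaf u → u ≠ T.root →
    ∃ v, T.IsChild v u ∧ T.IsLeaf v := by
  intro u hu hur
  by_contra hcon
  push_neg at hcon
  apply hLRT.2 u
  refine ⟨hur, hu, fun w => T.leaf_contract_iff hu hur w, fun a b => ⟨?_, ?_⟩⟩
  · intro hbm
    exact ⟨(T.leaf_contract_iff hu hur a).mp hbm.1, (T.leaf_contract_iff hu hur b).mp hbm.2.1,
      hbm.2.2.1, fun y' hy' hσ w hwa hwy' =>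
        hbm.2.2.2 y'.1 ((T.leaf_contract_iff hu hur y').mpr hy') hσ w.1 hwa hwy'⟩
  · intro hbm
    have hla : T.IsLeaf a.1 := (T.leaf_contract_iff hu hur a).mpr hbm.1
    have hlb : T.IsLeaf b.1 := (T.leaf_contract_iff hu hur b).mpr hbm.2.1
    refine ⟨hla, hlb, hbm.2.2.1, ?_⟩
    intro y' hy' hσ w hwa hwy'
    have hy'u : y' ≠ u := fun h => hu (h ▸ hy')
    by_cases hwu : w = u
    · subst hwu
      have hau : a.1 ≠ w := fun h => hu (h ▸ hla)
      obtain ⟨c, hcchild, hca⟩ := T.exists_child_above hwa hau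
      have hcleaf : ¬ T.IsLeaf c := hcon c hcchild
      obtain ⟨z, hzl, hcz, hzc⟩ := T.both_colors σ hLRT h2 hcleaf hla
      have hσz : σ z = σ b.1 :=
        T.color_eq_of_two σ h2 hla hlb hzl
          (fun h => hbm.2.2.1 h.symm) hzc
      have hzu : z ≠ w := fun h => hu (h ▸ hzl)
      have hcu : c ≠ w := Ne.symm hcchild.2.1
      have := hbm.2.2.2 ⟨z, hzu⟩ ((T.leaf_contract_iff hu hur _).mp hzl) hσz ⟨c, hcu⟩ hca hcz
      exact T.trans _ _ _ hcchild.1 this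
    · exact hbm.2.2.2 ⟨y', hy'u⟩ ((T.leaf_contract_iff hu hur _).mp hy') hσ ⟨w, hwu⟩ hwa hwy'

end Aux

/-- Let `(T,σ)` be the least resolved tree of a 2-colored BMG
`(G,σ)`.  Every inner vertex `u ≠ ρ_T` has a child that is a leaf; if moreover
`(G,σ)` is connected, every inner vertex (including the root) has a child that
is a leaf. -/
theorem lrt_support_leaves_exist {V C : Type} [Fintype V]
    (T : RTree V) (σ : V → C) (hLRT : T.LeastResolved σ)
    (h2 : T.TwoColored σ) :
    (∀ u, ¬ T.IsLeaf u → u ≠ T.root → ∃ v, T.IsChild v u ∧ T.IsLeaf v) ∧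
    (T.BMGConnected σ → ∀ u, ¬ T.IsLeaf u → ∃ v, T.IsChild v u ∧ T.IsLeaf v) := by
  constructor
  · exact T.key_lemma σ hLRT h2
  · intro hconn u hu
    by_cases hur : u = T.root
    case neg => exact T.key_lemma σ hLRT h2 u hu hur
    subst hur
    by_contra hcon
    push_neg at hcon
    obtain ⟨c₁, c₂, hc12, h1, h2'⟩ := hLRT.1 _ hu
    obtain ⟨z₁, hz₁l, hz₁⟩ := T.exists_leaf_desc c₁
    obtain ⟨z₂, hz₂l, hz₂⟩ := T.exists_leaf_desc c₂
    have step : ∀ x y, T.BestMatch σ x y → ∀ c, T.IsChild c T.root → T.anc c x → T.anc c y := by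
      intro x y hbm c hc hcx
      have hcleaf : ¬ T.IsLeaf c := fun h => hcon c hc h
      obtain ⟨z, hzl, hcz, hzc⟩ := T.both_colors σ hLRT h2 hcleaf hbm.1
      have hσz : σ z = σ y :=
        T.color_eq_of_two σ h2 hbm.1 hbm.2.1 hzl (Ne.symm hbm.2.2.1) hzc
      exact hbm.2.2.2 z hzl hσz c hcx hcz
    have inv : ∀ {x y : V},
        Relation.ReflTransGen (fun a b => a ∈ T.leaves ∧ b ∈ T.leaves ∧
          (T.BestMatch σ a b ∨ T.BestMatch σ b a)) x y →
        T.anc c₁ x → T.anc c₁ y := by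
      intro x y h
      induction h with
      | refl => exact id
      | tail hxb hbc ih =>
        intro hx
        have hb := ih hx
        rcases hbc.2.2 with harc | harc
        · exact step _ _ harc c₁ h1 hb
        · -- harc : BestMatch from target to b
          rename_i b y'
          have hyleaf : T.IsLeaf y' := hbc.2.1
          have hynr : y' ≠ T.root := fun h => hu (h ▸ hyleaf)
          obtain ⟨c', hc', hc'y⟩ := T.exists_child_above (T.root_anc y') hynr
          have hc'b : T.anc c' b := step _ _ harc c' hc' hc'y
          have : c' = c₁ := T.child_unique hc' h1 hc'b hb
          exact this ▸ hc'y
    have hfin := inv (hconn.2 z₁ hz₁l z₂ hz₂l) (by exact hz₁)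
    exact hc12 (T.child_unique h1 h2' hfin hz₂)
end

section
/- If (G,σ) is a 2-BMG, then its support set S satisfies S = S^(1), where S^(1) = {x ∈ U(G,σ) : N⁻(x) ⊆ U(G,σ)}. That is, the decreasing sequence S^(k) stabilizes after a single iteration. -/
/-- the set `S⁽¹⁾ = {x ∈ U(G,σ) : N⁻(x) ⊆ U(G,σ)}` for the BMG `G(T,σ)`. -/
def bmgS1 {V C : Type} (T : RTree V) (σ : V → C) : Set V :=
  {x | x ∈ T.Umbrella σ ∧ ∀ y, T.BestMatch σ y x → y ∈ T.Umbrella σ}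

/-- If `(G,σ)` is a 2-BMG (here: `G = G(T,σ)` for a
phylogenetic tree `T` whose leaves carry exactly two colors), then its support
set `S` satisfies `S = S⁽¹⁾`; the decreasing sequence `S⁽ᵏ⁾` stabilizes after
one iteration. -/
theorem support_set_eq_S1 {V C : Type} [Fintype V]
    (T : RTree V) (σ : V → C) (hphy : T.Phylo) (h2 : T.TwoColored σ) :
    ∀ S : Set V, T.IsSupportSet σ S → S = bmgS1 T σ := by
  obtain ⟨c₁, c₂, hc, hcol⟩ := h2
  intro S hS
  obtain ⟨hSU, hSin, hmax⟩ := hS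
  have hmem : ∀ w, T.IsLeaf w → σ w = c₁ ∨ σ w = c₂ := by
    intro w hw
    have : σ w ∈ T.leafColors σ := ⟨w, hw, rfl⟩
    rw [hcol] at this
    exact this
  -- S¹ is contained in the umbrella set
  have hS1U : bmgS1 T σ ⊆ T.Umbrella σ := fun x hx => hx.1
  -- S¹ is closed under in-neighbours
  have hS1in : T.InClosed σ (bmgS1 T σ) := by
    intro x hx y hyx
    refine ⟨hx.2 y hyx, ?_⟩
    intro z hzy
    have hxU := hx.1
    obtain ⟨hyleaf, hxleaf, hyx_ne, hyx_prop⟩ := hyx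
    obtain ⟨hzleaf, hyleaf', hzy_ne, hzy_prop⟩ := hzy
    have hzx : σ z = σ x := by
      rcases hmem z hzleaf with h | h <;> rcases hmem x hxleaf with h' | h' <;>
        rcases hmem y hyleaf with h'' | h'' <;> simp_all
    refine ⟨hzleaf, ?_⟩
    intro q hqleaf hqz
    have hqy : σ q = σ y := by
      rcases hmem q hqleaf with h | h <;> rcases hmem y hyleaf with h' | h' <;>
        rcases hmem z hzleaf with h'' | h'' <;> simp_all
    refine ⟨hzleaf, hqleaf, Ne.symm hqz, ?_⟩
    intro q' hq'leaf hq'c u huz huq'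
    have hq'y : σ q' = σ y := hq'c.trans hqy
    have huy : T.anc u y := hzy_prop q' hq'leaf hq'y u huz huq'
    have hux : T.anc u x := hyx_prop z hzleaf hzx u huy huz
    have hqx : σ q ≠ σ x := by rw [hqy]; exact fun h => hyx_ne h
    have hbxq := hxU.2 q hqleaf hqx
    exact hbxq.2.2.2 y hyleaf hqy.symm u hux huy
  -- S ⊆ S¹
  have hsub : S ⊆ bmgS1 T σ := by
    intro x hx
    exact ⟨hSU hx, fun y hy => hSU (hSin x hx y hy)⟩
  exact (hmax _ hsub hS1U hS1in).symm
end

section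
/- Let (G,σ) be a 2-BMG, (T,σ) its least resolved tree with root ρ, and S_ρ the support leaves of ρ. If W := U(G,σ) \ S_ρ is nonempty, then S_ρ ≠ ∅, G is connected, and G − S_ρ is connected. -/
/-!
Let `x ∈ W` and let `v` be the child of the root `ρ` above `x`. Since `x ∉ S_ρ`, `v` is an inner
vertex, and since the edge above `v` is not redundant, `T(v)` has leaves of both colors. As `x` is an
umbrella vertex, every leaf of the other color is a best match of `x` and so lies below `v`. Hence a
second child of `ρ` cannot be inner, i.e. it is a support leaf, and every leaf is joined to `x` by a
path of length at most two through a leaf of the other color, which avoids `S_ρ`.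
-/

lemma connectedOn_of_reflTransGen {β : Type} {A : β → β → Prop} {S : Set β} {x : β} (hx : x ∈ S)
    (h : ∀ y ∈ S, Relation.ReflTransGen (fun a b => a ∈ S ∧ b ∈ S ∧ (A a b ∨ A b a)) x y) :
    ConnectedOn A S := by
  set R : β → β → Prop := fun a b => a ∈ S ∧ b ∈ S ∧ (A a b ∨ A b a)
  have hR : Function.swap R ≤ R := fun _ _ ⟨hb, ha, hba⟩ => ⟨ha, hb, hba.symm⟩
  exact ⟨⟨x, hx⟩, fun y hy z hz =>
    (Relation.ReflTransGen.mono hR y x (Relation.reflTransGen_swap.2 (h y hy))).trans (h z hz)⟩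

namespace RTree

variable {V C : Type} {T : RTree V} {σ : V → C}

lemma IsLeaf.ne_root {x y : V} (hx : T.IsLeaf x) (hxy : x ≠ y) : x ≠ T.root := by
  rintro rfl
  exact hxy (hx y (T.root_anc y)).symm

lemma IsChild.ne_root {u v : V} (h : T.IsChild v u) : v ≠ T.root := by
  rintro rfl
  exact h.2.1 (T.antisymm _ _ h.1 (T.root_anc u))

lemma IsChild.not_isLeaf {u v : V} (h : T.IsChild v u) : ¬ T.IsLeaf u :=
  fun hu => h.2.1 (hu v h.1).symm

lemma IsChild.not_anc_of_ne {u v v' z : V} (hv : T.IsChild v u) (hv' : T.IsChild v' u)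
    (hne : v ≠ v') (hz : T.anc v z) : ¬ T.anc v' z := by
  intro hz'
  rcases T.chain v v' z hz hz' with h | h
  · rcases hv'.2.2 v hv.1 h with h' | h'
    · exact hv.2.1 h'.symm
    · exact hne h'
  · rcases hv.2.2 v' hv'.1 h with h' | h'
    · exact hv'.2.1 h'.symm
    · exact hne h'.symm

lemma IsChild.not_mem_supportLeaves {u v z : V} (hv : T.IsChild v u) (hvl : ¬ T.IsLeaf v)
    (hvz : T.anc v z) : z ∉ T.SupportLeaves u := by
  rintro ⟨hz, hzl⟩
  rcases hz.2.2 v hv.1 hvz with h | h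
  · exact hv.2.1 h.symm
  · exact hvl (h ▸ hzl)

section Finite

variable [Finite V]

lemma exists_highest (T : RTree V) {S : Set V} (hS : S.Nonempty) :
    ∃ m ∈ S, ∀ a ∈ S, T.anc a m → a = m := by
  let : Preorder V := { le := T.anc, le_refl := T.refl, le_trans := T.trans }
  obtain ⟨m, hm, hmin⟩ := S.toFinite.exists_minimal hS
  exact ⟨m, hm, fun a ha ham => T.antisymm _ _ ham (hmin ha ham)⟩

lemma exists_lowest (T : RTree V) {S : Set V} (hS : S.Nonempty) :
    ∃ m ∈ S, ∀ a ∈ S, T.anc m a → a = m := by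
  let : Preorder V :=
    { le a b := T.anc b a, le_refl := T.refl, le_trans _ _ _ hab hbc := T.trans _ _ _ hbc hab }
  obtain ⟨m, hm, hmin⟩ := S.toFinite.exists_minimal hS
  exact ⟨m, hm, fun a ha hma => T.antisymm _ _ (hmin ha hma) hma⟩

lemma exists_child (T : RTree V) {u y : V} (h : T.anc u y) (hne : u ≠ y) :
    ∃ v, T.IsChild v u ∧ T.anc v y := by
  obtain ⟨m, ⟨hum, hmy, hmu⟩, hmax⟩ :=
    T.exists_highest (S := {w | T.anc u w ∧ T.anc w y ∧ w ≠ u}) ⟨y, h, T.refl y, hne.symm⟩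
  refine ⟨m, ⟨hum, Ne.symm hmu, fun w huw hwm => ?_⟩, hmy⟩
  by_cases hwu : w = u
  · exact Or.inl hwu
  · exact Or.inr (hmax w ⟨huw, T.trans _ _ _ hwm hmy, hwu⟩ hwm)

/-- The lowest ancestor `m` of `y` above a leaf of the color of `w` is `lca(y, z)` for a best
match `z` of that color, namely any such leaf below `m`. -/
lemma exists_bestMatch {y w : V} (hy : T.IsLeaf y) (hw : T.IsLeaf w) (hne : σ y ≠ σ w) :
    ∃ z, σ z = σ w ∧ T.BestMatch σ y z := by
  obtain ⟨m, ⟨hmy, z, hz, hzw, hmz⟩, hmin⟩ :=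
    T.exists_lowest (S := {u | T.anc u y ∧ ∃ z, T.IsLeaf z ∧ σ z = σ w ∧ T.anc u z})
      ⟨T.root, T.root_anc y, w, hw, rfl, T.root_anc w⟩
  refine ⟨z, hzw, hy, hz, hzw ▸ hne, fun y' hy' hy'z u huy huy' => ?_⟩
  rcases T.chain u m y huy hmy with hum | hmu
  · exact T.trans _ _ _ hum hmz
  · rw [hmin u ⟨huy, y', hy', hy'z.trans hzw, huy'⟩ hmu]
    exact hmz

/-- Every leaf of `S` is joined to the umbrella vertex `x` directly, or through one of its best
matches of a color other than `σ x`. -/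
lemma connectedOn_of_mem_umbrella {S : Set V} {x : V} (hS : S ⊆ T.leaves) (hxS : x ∈ S)
    (hx : x ∈ T.Umbrella σ) (hSc : ∀ z, T.IsLeaf z → σ z ≠ σ x → z ∈ S)
    (hw : ∃ w, T.IsLeaf w ∧ σ w ≠ σ x) : ConnectedOn (T.BestMatch σ) S := by
  refine connectedOn_of_reflTransGen hxS fun y hy => ?_
  by_cases hyx : σ y = σ x
  · obtain ⟨w, hw, hwx⟩ := hw
    obtain ⟨z, hzw, hyz⟩ := exists_bestMatch (hS hy) hw (hyx ▸ hwx.symm)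
    have hzx : σ z ≠ σ x := hzw ▸ hwx
    have hzS := hSc z hyz.2.1 hzx
    exact .tail (.single ⟨hxS, hzS, .inl (hx.2 z hyz.2.1 hzx)⟩) ⟨hzS, hy, .inr hyz⟩
  · exact .single ⟨hxS, hy, .inl (hx.2 y (hS hy) hyx)⟩

end Finite

lemma isLeaf_contract_iff {v : V} (hv : v ≠ T.root) (hvl : ¬ T.IsLeaf v) (w : {w : V // w ≠ v}) :
    T.IsLeaf w.1 ↔ (T.contract v hv).IsLeaf w := by
  refine ⟨fun hw z hz => Subtype.ext (hw z.1 hz), fun hw z hz => ?_⟩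
  by_cases hzv : z = v
  · subst hzv
    obtain ⟨z', hzz', hz'⟩ : ∃ z', T.anc z z' ∧ z' ≠ z := by
      by_contra! h
      exact hvl h
    have hz'w : z' = w.1 := congrArg Subtype.val (hw ⟨z', hz'⟩ (T.trans _ _ _ hz hzz'))
    exact absurd (T.antisymm _ _ hz (hz'w ▸ hzz')) w.2
  · exact congrArg Subtype.val (hw ⟨z, hzv⟩ hz)

/-- Contracting the edge above `v` only adds `v` as a candidate for `lca(x, y')` with `σ y' ≠ σ x`,
which is impossible when all leaves below `v` have the same color. -/
lemma redundant_of_forall_color_eq {v : V} (hv : v ≠ T.root) (hvl : ¬ T.IsLeaf v) {e : C}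
    (hmono : ∀ w, T.IsLeaf w → T.anc v w → σ w = e) : T.Redundant σ v := by
  have hleaf := isLeaf_contract_iff hv hvl
  refine ⟨hv, hvl, hleaf, fun x y => ⟨?_, ?_⟩⟩
  · rintro ⟨hx, hy, hxy, hbest⟩
    exact ⟨(hleaf x).1 hx, (hleaf y).1 hy, hxy,
      fun y' hy' hy'y u hux huy' => hbest y'.1 ((hleaf y').2 hy') hy'y u.1 hux huy'⟩
  · rintro ⟨hx, hy, hxy, hbest⟩
    refine ⟨(hleaf x).2 hx, (hleaf y).2 hy, hxy, fun y' hy' hy'y u hux huy' => ?_⟩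
    have hy'v : y' ≠ v := fun h => hvl (h ▸ hy')
    by_cases huv : u = v
    · subst huv
      exact absurd ((hmono x.1 ((hleaf x).2 hx) hux).trans
        ((hmono y' hy' huy').symm.trans hy'y)) hxy
    · exact hbest ⟨y', hy'v⟩ ((hleaf ⟨y', hy'v⟩).1 hy') hy'y ⟨u, huv⟩ hux huy'

lemma exists_isLeaf_anc_color_ne {v : V} (hnr : ¬ T.Redundant σ v) (hv : v ≠ T.root)
    (hvl : ¬ T.IsLeaf v) (e : C) : ∃ w, T.IsLeaf w ∧ T.anc v w ∧ σ w ≠ e := by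
  by_contra! hmono
  exact hnr (redundant_of_forall_color_eq hv hvl hmono)

/-- A second child `v'` of `u` is a leaf: otherwise, as its edge is not redundant, some leaf below
`v'` would avoid the color `e`, and would therefore lie below `v` as well. -/
lemma LeastResolved.supportLeaves_nonempty (hLRT : T.LeastResolved σ) {u v : V}
    (hv : T.IsChild v u) {e : C} (hbelow : ∀ z, T.IsLeaf z → σ z ≠ e → T.anc v z) :
    (T.SupportLeaves u).Nonempty := by
  obtain ⟨v', hv', hvv'⟩ : ∃ v', T.IsChild v' u ∧ v ≠ v' := by
    obtain ⟨v₁, v₂, hne, hv₁, hv₂⟩ := hLRT.1 u hv.not_isLeaf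
    by_cases h : v = v₁
    · exact ⟨v₂, hv₂, h ▸ hne⟩
    · exact ⟨v₁, hv₁, h⟩
  by_cases hv'l : T.IsLeaf v'
  · exact ⟨v', hv', hv'l⟩
  · obtain ⟨w, hw, hv'w, hwe⟩ := exists_isLeaf_anc_color_ne (hLRT.2 v') hv'.ne_root hv'l e
    exact absurd hv'w (hv.not_anc_of_ne hv' hvv' (hbelow w hw hwe))

lemma TwoColored.exists_isLeaf_color_ne (h2 : T.TwoColored σ) (x : V) :
    ∃ w, T.IsLeaf w ∧ σ w ≠ σ x := by
  obtain ⟨c₁, c₂, hc, hcol⟩ := h2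
  have hmem : ∀ c ∈ ({c₁, c₂} : Set C), ∃ w, T.IsLeaf w ∧ σ w = c := by
    rw [← hcol]
    rintro c ⟨w, hw, rfl⟩
    exact ⟨w, hw, rfl⟩
  by_cases hx : σ x = c₁
  · obtain ⟨w, hw, rfl⟩ := hmem c₂ (by simp)
    exact ⟨w, hw, hx ▸ Ne.symm hc⟩
  · obtain ⟨w, hw, rfl⟩ := hmem c₁ (by simp)
    exact ⟨w, hw, Ne.symm hx⟩

lemma TwoColored.color_eq_of_ne (h2 : T.TwoColored σ) {x y z : V} (hx : T.IsLeaf x)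
    (hy : T.IsLeaf y) (hz : T.IsLeaf z) (hyx : σ y ≠ σ x) (hzx : σ z ≠ σ x) : σ y = σ z := by
  obtain ⟨c₁, c₂, -, hcol⟩ := h2
  have hmem : ∀ a, T.IsLeaf a → σ a = c₁ ∨ σ a = c₂ := fun a ha => by
    have : σ a ∈ T.leafColors σ := ⟨a, ha, rfl⟩
    simpa [hcol] using this
  rcases hmem x hx with h | h <;> rcases hmem y hy with h' | h' <;>
    rcases hmem z hz with h'' | h'' <;> simp_all

/-- `z` is a best match of `x` of the color of `w`, so `lca(x, z) ⪯ lca(x, w) ⪯ v`. -/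
lemma TwoColored.anc_of_mem_umbrella (h2 : T.TwoColored σ) {x v w : V} (hx : x ∈ T.Umbrella σ)
    (hvx : T.anc v x) (hw : T.IsLeaf w) (hvw : T.anc v w) (hwx : σ w ≠ σ x) {z : V}
    (hz : T.IsLeaf z) (hzx : σ z ≠ σ x) : T.anc v z :=
  (hx.2 z hz hzx).2.2.2 w hw (h2.color_eq_of_ne hx.1 hw hz hwx hzx) v hvx hvw

end RTree

/-- Let `(G,σ)` be a 2-BMG, `(T,σ)` its LRT with root `ρ`,
and `S_ρ` the support leaves of `ρ`.  If `W = U(G,σ) \ S_ρ ≠ ∅`, then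
`S_ρ ≠ ∅`, `G` is connected, and `G − S_ρ` is connected. -/
theorem W_nonempty_connectivity {V C : Type} [Fintype V]
    (T : RTree V) (σ : V → C) (hLRT : T.LeastResolved σ)
    (h2 : T.TwoColored σ)
    (hW : (T.Umbrella σ \ T.SupportLeaves T.root).Nonempty) :
    (T.SupportLeaves T.root).Nonempty ∧
      T.BMGConnected σ ∧
      ConnectedOn (T.BestMatch σ) (T.leaves \ T.SupportLeaves T.root) := by
  obtain ⟨x, hxU, hxS⟩ := hW
  obtain ⟨w, hw, hwx⟩ := h2.exists_isLeaf_color_ne x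
  obtain ⟨v, hv, hvx⟩ := T.exists_child (T.root_anc x)
    (hxU.1.ne_root fun h => hwx (congrArg σ h).symm).symm
  have hvl : ¬ T.IsLeaf v := fun h => hxS (h x hvx ▸ ⟨hv, h⟩)
  obtain ⟨a, ha, hva, hax⟩ :=
    RTree.exists_isLeaf_anc_color_ne (hLRT.2 v) hv.ne_root hvl (σ x)
  have hbelow : ∀ z, T.IsLeaf z → σ z ≠ σ x → T.anc v z :=
    fun z hz hzx => h2.anc_of_mem_umbrella hxU hvx ha hva hax hz hzx
  refine ⟨hLRT.supportLeaves_nonempty hv hbelow,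
    RTree.connectedOn_of_mem_umbrella subset_rfl hxU.1 hxU (fun z hz _ => hz) ⟨w, hw, hwx⟩,
    RTree.connectedOn_of_mem_umbrella Set.sdiff_subset ⟨hxU.1, hxS⟩ hxU
      (fun z hz hzx => ⟨hz, hv.not_mem_supportLeaves hvl (hbelow z hz hzx)⟩) ⟨w, hw, hwx⟩⟩
end
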